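/- arXiv:1905.10885 — 4 statements merged into one kernel-verified Lean document; each statement's English description precedes it below -/
import Mathlib

section
/- Let p, q be probability mass functions on a finite set X with p(x) > 0 and q(x) > 0 for all x. Define L(p,q) = ∑_x [ -p(x) log( q(x)/(p(x)+q(x)) ) - q(x) log( p(x)/(p(x)+q(x)) ) ]. Then L(p,q) ≥ log 4. -/
open Finset Real

/- Each summand is at least `(p x + q x) * log 2`: after splitting off `log 2`, the bound
`log t ≤ t - 1` at `t = 2q/(p+q)` and `t = 2p/(p+q)` leaves the nonnegative remainder
`(p - q)² / (p + q)`. Summing uses `∑ (p + q) = 2` and `2 log 2 = log 4`. -/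

theorem add_mul_log_two_le (a b : ℝ) (ha : 0 < a) (hb : 0 < b) :
    (a + b) * log 2 ≤ -a * log (b / (a + b)) - b * log (a / (a + b)) := by
  have hab : 0 < a + b := by linarith
  have hlog_b := log_le_sub_one_of_pos (show 0 < 2 * (b / (a + b)) by positivity)
  have hlog_a := log_le_sub_one_of_pos (show 0 < 2 * (a / (a + b)) by positivity)
  rw [log_mul two_ne_zero (by positivity)] at hlog_b hlog_a
  have hlinear : a * (2 * (b / (a + b)) - 1) + b * (2 * (a / (a + b)) - 1)
      = -((a - b) ^ 2 / (a + b)) := by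
    field_simp
    ring
  have hrem : 0 ≤ (a - b) ^ 2 / (a + b) := by positivity
  nlinarith [mul_le_mul_of_nonneg_left hlog_b ha.le, mul_le_mul_of_nonneg_left hlog_a hb.le]

theorem stmt_5_general (X : Type*) [Fintype X]
    (p q : X → ℝ) (hp : ∀ x, 0 < p x) (hq : ∀ x, 0 < q x)
    (hps : ∑ x, p x = 1) (hqs : ∑ x, q x = 1) :
    Real.log 4 ≤
      ∑ x, (-p x * Real.log (q x / (p x + q x)) - q x * Real.log (p x / (p x + q x))) := by
  calc log 4 = ∑ x, (p x + q x) * log 2 := by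
        rw [← sum_mul, sum_add_distrib, hps, hqs, show (4 : ℝ) = 2 ^ 2 by norm_num, log_pow]
        push_cast
        ring
    _ ≤ _ := sum_le_sum fun x _ => add_mul_log_two_le (p x) (q x) (hp x) (hq x)

/-- The symmetrized confusion loss between two strictly positive probability mass
functions on a finite set is at least `log 4`. -/
theorem stmt_5 (X : Type*) [Fintype X] [Nonempty X]
    (p q : X → ℝ) (hp : ∀ x, 0 < p x) (hq : ∀ x, 0 < q x)
    (hps : ∑ x, p x = 1) (hqs : ∑ x, q x = 1) :
    Real.log 4 ≤
      ∑ x, (-p x * Real.log (q x / (p x + q x)) - q x * Real.log (p x / (p x + q x))) :=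
  stmt_5_general X p q hp hq hps hqs
end

section
/- Let p, q be strictly positive probability mass functions on a finite set X and L(p,q) = ∑_x [ -p(x) log( q(x)/(p(x)+q(x)) ) - q(x) log( p(x)/(p(x)+q(x)) ) ]. Then L(p,q) = log 4 if and only if p(x) = q(x) for all x. -/
/-! Summand by summand, `log x ≤ x - 1` gives
`-a log (b / (a + b)) - b log (a / (a + b)) ≥ (a + b) log 2 + (a - b)² / (a + b)`.
Summing with `∑ p = ∑ q = 1` yields `L(p, q) ≥ log 4`, with equality iff every summand is tight,
i.e. iff `p = q` pointwise. -/

open Finset Real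

/-- The excess of one summand of the confusion loss over its value `(a + b) log 2` at `a = b`. -/
noncomputable def confusionExcess (a b : ℝ) : ℝ :=
  (-a * log (b / (a + b)) - b * log (a / (a + b))) - (a + b) * log 2

lemma mul_one_sub_two_mul_div_le (a b : ℝ) (ha : 0 ≤ a) (hb : 0 < b) :
    a * (1 - 2 * b / (a + b)) ≤ -a * log (b / (a + b)) - a * log 2 := by
  have hlog : log (2 * (b / (a + b))) ≤ 2 * (b / (a + b)) - 1 :=
    log_le_sub_one_of_pos (by positivity)
  rw [log_mul two_ne_zero (by positivity)] at hlog
  have := mul_le_mul_of_nonneg_left hlog ha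
  rw [mul_div_assoc]
  linarith

/-- Each half comes from `log x ≤ x - 1` at `x = 2b / (a + b)`, resp. `x = 2a / (a + b)`. -/
lemma sq_sub_div_add_le_confusionExcess (a b : ℝ) (ha : 0 < a) (hb : 0 < b) :
    (a - b) ^ 2 / (a + b) ≤ confusionExcess a b := by
  have key : (a - b) ^ 2 / (a + b) = a * (1 - 2 * b / (a + b)) + b * (1 - 2 * a / (a + b)) := by
    field_simp
    ring
  have hba := mul_one_sub_two_mul_div_le b a hb.le ha
  rw [add_comm b a] at hba
  rw [key, confusionExcess]
  linarith [mul_one_sub_two_mul_div_le a b ha.le hb]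

lemma confusionExcess_nonneg (a b : ℝ) (ha : 0 < a) (hb : 0 < b) : 0 ≤ confusionExcess a b :=
  (by positivity : 0 ≤ (a - b) ^ 2 / (a + b)).trans (sq_sub_div_add_le_confusionExcess a b ha hb)

lemma confusionExcess_self (a : ℝ) (ha : 0 < a) : confusionExcess a a = 0 := by
  have half : a / (a + a) = 2⁻¹ := by field_simp; ring
  rw [confusionExcess, half, log_inv]
  ring

lemma confusionExcess_eq_zero_iff (a b : ℝ) (ha : 0 < a) (hb : 0 < b) :
    confusionExcess a b = 0 ↔ a = b := by
  refine ⟨fun h => ?_, fun h => h ▸ confusionExcess_self a ha⟩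
  by_contra hne
  have hsub : a - b ≠ 0 := sub_ne_zero.mpr hne
  have hpos : 0 < (a - b) ^ 2 / (a + b) := by positivity
  linarith [sq_sub_div_add_le_confusionExcess a b ha hb]

lemma sum_confusionExcess {X : Type*} [Fintype X] (p q : X → ℝ)
    (hps : ∑ x, p x = 1) (hqs : ∑ x, q x = 1) :
    ∑ x, confusionExcess (p x) (q x) =
      (∑ x, (-p x * log (q x / (p x + q x)) - q x * log (p x / (p x + q x)))) - log 4 := by
  have hlog4 : log 4 = 2 * log 2 := by
    rw [show (4 : ℝ) = 2 ^ 2 by norm_num, log_pow]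
    push_cast
    ring
  simp only [confusionExcess]
  rw [sum_sub_distrib, ← sum_mul, sum_add_distrib, hps, hqs, hlog4]
  ring

theorem stmt_6_general (X : Type*) [Fintype X]
    (p q : X → ℝ) (hp : ∀ x, 0 < p x) (hq : ∀ x, 0 < q x)
    (hps : ∑ x, p x = 1) (hqs : ∑ x, q x = 1) :
    (∑ x, (-p x * Real.log (q x / (p x + q x)) - q x * Real.log (p x / (p x + q x))))
      = Real.log 4 ↔ ∀ x, p x = q x := by
  rw [← sub_eq_zero, ← sum_confusionExcess p q hps hqs,
    sum_eq_zero_iff_of_nonneg fun x _ => confusionExcess_nonneg _ _ (hp x) (hq x)]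
  simp only [mem_univ, true_implies]
  exact forall_congr' fun x => confusionExcess_eq_zero_iff _ _ (hp x) (hq x)

/-- The symmetrized confusion loss equals `log 4` iff the two strictly positive
probability mass functions coincide. -/
theorem stmt_6 (X : Type*) [Fintype X] [Nonempty X]
    (p q : X → ℝ) (hp : ∀ x, 0 < p x) (hq : ∀ x, 0 < q x)
    (hps : ∑ x, p x = 1) (hqs : ∑ x, q x = 1) :
    (∑ x, (-p x * Real.log (q x / (p x + q x)) - q x * Real.log (p x / (p x + q x))))
      = Real.log 4 ↔ ∀ x, p x = q x :=
  stmt_6_general X p q hp hq hps hqs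
end

section
/- Let a, b : Fin K → ℝ with a_k, b_k > 0 and ∑_k a_k = ∑_k b_k = 1. Then ∑_k [ -a_k log(b_k/(a_k+b_k)) - b_k log(a_k/(a_k+b_k)) ] ≥ log 4, with equality iff a_k = b_k for all k. -/
/-!
Each summand is bounded below by `(a + b) * log 2`, and summing these bounds gives
`log 4` because `a` and `b` both sum to `1`. Termwise, the excess over `(a + b) * log 2` splits as
`(a + b) / 2 * log ((a + b) ^ 2 / (4 * a * b)) + (a - b) / 2 * (log a - log b)`:
the first part is nonnegative by AM-GM and the second is positive unless `a = b`,
since `log` is strictly increasing.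
-/

open Finset Real

noncomputable def confusion (a b : ℝ) : ℝ :=
  -a * log (b / (a + b)) - b * log (a / (a + b))

lemma sub_mul_log_sub_log_pos {a b : ℝ} (ha : 0 < a) (hb : 0 < b) (hne : a ≠ b) :
    0 < (a - b) * (log a - log b) := by
  rcases hne.lt_or_gt with h | h
  · exact mul_pos_of_neg_of_neg (sub_neg.2 h) (sub_neg.2 (log_lt_log ha h))
  · exact mul_pos (sub_pos.2 h) (sub_pos.2 (log_lt_log hb h))

lemma confusion_self (a : ℝ) : confusion a a = (a + a) * log 2 := by
  rcases eq_or_ne a 0 with rfl | ha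
  · simp [confusion]
  · have half : a / (a + a) = 2⁻¹ := by field_simp; ring
    rw [confusion, half, log_inv]
    ring

lemma confusion_sub_add_mul_log_two {a b : ℝ} (ha : 0 < a) (hb : 0 < b) :
    confusion a b - (a + b) * log 2 =
      (a + b) / 2 * log ((a + b) ^ 2 / (4 * a * b)) + (a - b) / 2 * (log a - log b) := by
  have hab : 0 < a + b := add_pos ha hb
  have log_four : log 4 = 2 * log 2 := by
    rw [show (4 : ℝ) = 2 ^ 2 by norm_num, log_pow, Nat.cast_ofNat]
  rw [confusion, log_div hb.ne' hab.ne', log_div ha.ne' hab.ne', log_div (by positivity)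
    (by positivity), log_mul (by positivity) hb.ne', log_mul (by norm_num) ha.ne', log_pow,
    log_four]
  push_cast
  ring

lemma add_mul_log_two_lt_confusion {a b : ℝ} (ha : 0 < a) (hb : 0 < b) (hne : a ≠ b) :
    (a + b) * log 2 < confusion a b := by
  have am_gm : 0 ≤ (a + b) / 2 * log ((a + b) ^ 2 / (4 * a * b)) :=
    mul_nonneg (by positivity)
      (log_nonneg ((one_le_div (by positivity)).2 (four_mul_le_sq_add a b)))
  have monotone_gap : 0 < (a - b) / 2 * (log a - log b) := by
    rw [div_mul_eq_mul_div]
    exact half_pos (sub_mul_log_sub_log_pos ha hb hne)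
  linarith [confusion_sub_add_mul_log_two ha hb]

lemma add_mul_log_two_le_confusion {a b : ℝ} (ha : 0 < a) (hb : 0 < b) :
    (a + b) * log 2 ≤ confusion a b := by
  rcases eq_or_ne a b with rfl | hne
  · exact (confusion_self a).ge
  · exact (add_mul_log_two_lt_confusion ha hb hne).le

lemma confusion_eq_add_mul_log_two_iff {a b : ℝ} (ha : 0 < a) (hb : 0 < b) :
    confusion a b = (a + b) * log 2 ↔ a = b := by
  refine ⟨fun h => ?_, fun h => h ▸ confusion_self a⟩
  by_contra hne
  exact (add_mul_log_two_lt_confusion ha hb hne).ne' h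

theorem stmt_13_general (K : ℕ) (a b : Fin K → ℝ)
    (ha : ∀ k, 0 < a k) (hb : ∀ k, 0 < b k)
    (has : ∑ k, a k = 1) (hbs : ∑ k, b k = 1) :
    Real.log 4 ≤
      (∑ k, (-a k * Real.log (b k / (a k + b k)) - b k * Real.log (a k / (a k + b k)))) ∧
    ((∑ k, (-a k * Real.log (b k / (a k + b k)) - b k * Real.log (a k / (a k + b k))))
        = Real.log 4 ↔ ∀ k, a k = b k) := by
  change log 4 ≤ ∑ k, confusion (a k) (b k) ∧ (∑ k, confusion (a k) (b k) = log 4 ↔ _)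
  have sum_bound : ∑ k, (a k + b k) * log 2 = log 4 := by
    rw [← sum_mul, sum_add_distrib, has, hbs, show (4 : ℝ) = 2 ^ 2 by norm_num, log_pow]
    norm_num
  have termwise : ∀ k ∈ univ, (a k + b k) * log 2 ≤ confusion (a k) (b k) :=
    fun k _ => add_mul_log_two_le_confusion (ha k) (hb k)
  rw [← sum_bound, eq_comm, sum_eq_sum_iff_of_le termwise]
  exact ⟨sum_le_sum termwise, by simp [confusion_eq_add_mul_log_two_iff, ha, hb, eq_comm]⟩

/-- Lemma 2 for probability vectors on `Fin K`: the symmetrized confusion loss is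
at least `log 4`, with equality iff the vectors coincide. -/
theorem stmt_13 (K : ℕ) (hK : 0 < K) (a b : Fin K → ℝ)
    (ha : ∀ k, 0 < a k) (hb : ∀ k, 0 < b k)
    (has : ∑ k, a k = 1) (hbs : ∑ k, b k = 1) :
    Real.log 4 ≤
      (∑ k, (-a k * Real.log (b k / (a k + b k)) - b k * Real.log (a k / (a k + b k)))) ∧
    ((∑ k, (-a k * Real.log (b k / (a k + b k)) - b k * Real.log (a k / (a k + b k))))
        = Real.log 4 ↔ ∀ k, a k = b k) :=
  stmt_13_general K a b ha hb has hbs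
end

section
/- Discrete Theorem 1 (lower bound): Let Z be a finite feature space, and for each class k ∈ Fin K let pₖ, qₖ : Z → ℝ≥0 with ∑_z pₖ(z) = πₖˢ and ∑_z qₖ(z) = πₖᵗ where πₖˢ = πₖᵗ > 0 are the class priors (∑_k πₖˢ = 1). Suppose pₖ(z), qₖ(z) > 0 wherever defined. Then the encoder objective ∑_k ∑_z [ -pₖ(z) log( qₖ(z)/(∑_j pⱼ(z)+qⱼ(z)) ) - qₖ(z) log( pₖ(z)/(∑_j pⱼ(z)+qⱼ(z)) ) ] is at least ∑_k 2·πₖˢ·log 2. -/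
open Finset

lemma aux_pair (a b S : ℝ) (ha : 0 < a) (hb : 0 < b) (hS : a + b ≤ S) :
    (a + b) * Real.log 2 ≤ -a * Real.log (b / S) - b * Real.log (a / S) := by
  have hS0 : 0 < S := lt_of_lt_of_le (by linarith) hS
  have h1 : Real.log (2 * b / S) ≤ 2 * b / S - 1 :=
    Real.log_le_sub_one_of_pos (by positivity)
  have h2 : Real.log (2 * a / S) ≤ 2 * a / S - 1 :=
    Real.log_le_sub_one_of_pos (by positivity)
  have e1 : Real.log (2 * b / S) = Real.log 2 + Real.log (b / S) := by
    rw [mul_div_assoc, Real.log_mul two_ne_zero (by positivity)]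
  have e2 : Real.log (2 * a / S) = Real.log 2 + Real.log (a / S) := by
    rw [mul_div_assoc, Real.log_mul two_ne_zero (by positivity)]
  rw [e1] at h1; rw [e2] at h2
  -- from h1: log (b/S) ≤ 2b/S - 1 - log 2
  have key : 4 * a * b / S ≤ a + b := by
    rw [div_le_iff₀ hS0]
    nlinarith [sq_nonneg (a - b), mul_le_mul_of_nonneg_left hS (by linarith : (0:ℝ) ≤ a + b)]
  have hab : a * Real.log (b / S) + b * Real.log (a / S) ≤
      a * (2 * b / S - 1 - Real.log 2) + b * (2 * a / S - 1 - Real.log 2) := by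
    have := mul_le_mul_of_nonneg_left (by linarith : Real.log (b / S) ≤ 2 * b / S - 1 - Real.log 2) ha.le
    have := mul_le_mul_of_nonneg_left (by linarith : Real.log (a / S) ≤ 2 * a / S - 1 - Real.log 2) hb.le
    linarith
  have expand : a * (2 * b / S) + b * (2 * a / S) = 4 * a * b / S := by ring
  nlinarith [hab]

/-- Discrete Theorem 1 (lower bound): the encoder's fooling objective against the
optimal joint predictor is at least `∑ k, 2 * πₖ * log 2`, where `p k z = μˢ(z,k)`
and `q k z = μᵗ(z,k)` are strictly positive joint feature-class masses with
matching class priors `πₖˢ = πₖᵗ > 0` summing to `1`. -/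
theorem stmt_15 (Z : Type*) [Fintype Z] [Nonempty Z] (K : ℕ) (hK : 0 < K)
    (p q : Fin K → Z → ℝ)
    (hp : ∀ k z, 0 < p k z) (hq : ∀ k z, 0 < q k z)
    (πs πt : Fin K → ℝ)
    (hπs : ∀ k, πs k = ∑ z, p k z) (hπt : ∀ k, πt k = ∑ z, q k z)
    (hmatch : ∀ k, πs k = πt k) (hπpos : ∀ k, 0 < πs k)
    (hπ1 : ∑ k, πs k = 1) :
    (∑ k, 2 * πs k * Real.log 2) ≤
      ∑ k, ∑ z,
        (-p k z * Real.log (q k z / (∑ j, (p j z + q j z)))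
          - q k z * Real.log (p k z / (∑ j, (p j z + q j z)))) := by
  have hterm : ∀ k, 2 * πs k * Real.log 2 ≤
      ∑ z, (-p k z * Real.log (q k z / (∑ j, (p j z + q j z)))
          - q k z * Real.log (p k z / (∑ j, (p j z + q j z)))) := by
    intro k
    have h2 : 2 * πs k * Real.log 2 = ∑ z, (p k z + q k z) * Real.log 2 := by
      rw [← Finset.sum_mul, Finset.sum_add_distrib, ← hπs k, ← hπt k, ← hmatch k]
      ring
    rw [h2]
    apply Finset.sum_le_sum
    intro z _
    apply aux_pair _ _ _ (hp k z) (hq k z)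
    have : p k z + q k z ≤ ∑ j, (p j z + q j z) := by
      apply Finset.single_le_sum (f := fun j => p j z + q j z)
      · intro j _; exact (add_pos (hp j z) (hq j z)).le
      · exact Finset.mem_univ k
    exact this
  exact Finset.sum_le_sum fun k _ => hterm k
end
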